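/- arXiv:1610.01510 — 2 statements merged into one kernel-verified Lean document; each statement's English description precedes it below -/
import Mathlib

section
/- There are exactly 2 isomorphism classes of simple modules over the group algebra F₂[SL(2, F₃)]; that is, there exist two simple F₂[SL(2, F₃)]-modules that are not isomorphic to each other, and every simple F₂[SL(2, F₃)]-module is isomorphic to one of them. -/
/-!
The quaternion subgroup `Q₈ = {g | g ^ 4 = 1}` of `SL(2, 𝔽₃)` is a normal `2`-subgroup. On a
simple module in characteristic `2` its fixed vectors form a nonzero submodule (a `p`-group acting
on a finite set of size divisible by `p` has a fixed point besides `0`), so `Q₈` acts trivially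
and the module only sees `SL(2, 𝔽₃) ⧸ Q₈ ≅ C₃`, generated by the image of `u = !![1, 1; 0, 1]`.
If `u` fixes a nonzero vector, the module is trivial. Otherwise `u² + u + 1`, whose image is fixed
by `u`, kills the module, and it is `𝔽₄` with `u` acting as a primitive cube root of unity.
-/

/-- The group algebra `F₂[SL(2, F₃)]`. -/
noncomputable abbrev F₂SL₂F₃ : Type :=
  MonoidAlgebra (ZMod 2) (Matrix.SpecialLinearGroup (Fin 2) (ZMod 3))

universe u

open MonoidAlgebra Multiplicative

theorem IsSimpleModule.of_restrictScalars (R : Type*) {S M : Type*} [CommRing R] [Ring S]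
    [Algebra R S] [AddCommGroup M] [Module R M] [Module S M] [IsScalarTower R S M]
    [IsSimpleModule R M] : IsSimpleModule S M where
  exists_pair_ne := by
    have := IsSimpleModule.nontrivial R M
    exact ⟨⊥, ⊤, bot_ne_top⟩
  eq_bot_or_eq_top N := by
    simpa only [Submodule.restrictScalars_eq_bot_iff, Submodule.restrictScalars_eq_top_iff] using
      eq_bot_or_eq_top (N.restrictScalars R)

instance MonoidAlgebra.finite {k G : Type*} [Semiring k] [Finite k] [Finite G] :
    Finite (MonoidAlgebra k G) :=
  Finite.of_equiv _ (coeffEquiv.trans Finsupp.equivFunOnFinite).symm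

section FixedSubmodule

variable {k G U : Type*} [CommRing k] [Group G] [AddCommGroup U] [Module (MonoidAlgebra k G) U]

variable (k U) in
def fixedSubmodule (N : Subgroup G) [N.Normal] : Submodule (MonoidAlgebra k G) U where
  carrier := {u | ∀ n ∈ N, of k G n • u = u}
  add_mem' hu hv n hn := by rw [smul_add, hu n hn, hv n hn]
  zero_mem' _ _ := smul_zero _
  smul_mem' a u hu := by
    induction a using MonoidAlgebra.induction_on with
    | of g =>
      intro n hn
      rw [smul_smul, ← map_mul, show n * g = g * (g⁻¹ * n * g) by group, map_mul, mul_smul,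
        hu _ (Subgroup.Normal.conj_mem' inferInstance n hn g)]
    | add x y hx hy => intro n hn; rw [add_smul, smul_add, hx n hn, hy n hn]
    | smul r x hx =>
      intro n hn
      rw [Algebra.smul_def, mul_smul, smul_smul, ← Algebra.commutes, mul_smul, hx n hn]

variable {N : Subgroup G} [N.Normal]

@[simp]
theorem mem_fixedSubmodule {u : U} :
    u ∈ fixedSubmodule k U N ↔ ∀ n ∈ N, of k G n • u = u :=
  Iff.rfl

theorem fixedSubmodule_eq_top_iff :
    fixedSubmodule k U N = ⊤ ↔ ∀ n ∈ N, ∀ u : U, of k G n • u = u := by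
  simp only [Submodule.eq_top_iff', mem_fixedSubmodule]
  exact ⟨fun h n hn u => h u n hn, fun h u n hn => h n hn u⟩

theorem IsPGroup.fixedSubmodule_ne_bot {p : ℕ} [Fact p.Prime] [CharP k p] [Finite U]
    [Nontrivial U] (hN : IsPGroup p N) : fixedSubmodule k U N ≠ ⊥ := by
  let _ : MulAction N U := MulAction.compHom U ((of k G).comp N.subtype)
  have hp : p ∣ Nat.card U := by
    obtain ⟨u, hu⟩ := exists_ne (0 : U)
    have hpu : p • u = 0 := by
      rw [← Nat.cast_smul_eq_nsmul (MonoidAlgebra k G), ← map_natCast (algebraMap k _),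
        CharP.cast_eq_zero, map_zero, zero_smul]
    exact addOrderOf_eq_prime hpu hu ▸ addOrderOf_dvd_natCard u
  obtain ⟨u, hu, hu0⟩ := hN.exists_fixed_point_of_prime_dvd_card_of_fixed_point U hp (a := 0)
    fun n => smul_zero (of k G n)
  exact (Submodule.ne_bot_iff _).mpr ⟨u, fun n hn => hu ⟨n, hn⟩, hu0.symm⟩

theorem IsPGroup.smul_eq_self_of_isSimpleModule [Finite k] [Finite G] {p : ℕ} [Fact p.Prime]
    [CharP k p] [IsSimpleModule (MonoidAlgebra k G) U] (hN : IsPGroup p N) :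
    ∀ n ∈ N, ∀ u : U, of k G n • u = u := by
  have : Finite U := Module.finite_of_finite (MonoidAlgebra k G)
  have : Nontrivial U := IsSimpleModule.nontrivial (MonoidAlgebra k G) U
  exact fixedSubmodule_eq_top_iff.mp ((eq_bot_or_eq_top _).resolve_left hN.fixedSubmodule_ne_bot)

end FixedSubmodule

section TrivialModule

variable {k G U : Type*} [Field k] [Group G] [AddCommGroup U] [Module (MonoidAlgebra k G) U]

theorem isSimpleModule_trivial_asModule :
    IsSimpleModule (MonoidAlgebra k G) (Representation.trivial k G k).asModule :=
  have := IsSimpleModule.congr (Representation.trivial k G k).asModuleEquiv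
  .of_restrictScalars k

theorem nonempty_linearEquiv_trivial_asModule [Module k U] [IsScalarTower k (MonoidAlgebra k G) U]
    [IsSimpleModule (MonoidAlgebra k G) U] (h : ∀ (g : G) (u : U), of k G g • u = u) :
    Nonempty (U ≃ₗ[MonoidAlgebra k G] (Representation.trivial k G k).asModule) := by
  have := IsSimpleModule.nontrivial (MonoidAlgebra k G) U
  have := isSimpleModule_trivial_asModule (k := k) (G := G)
  obtain ⟨u₀, hu₀⟩ := exists_ne (0 : U)
  let e := (Representation.trivial k G k).asModuleEquiv
  let f : (Representation.trivial k G k).asModule →ₗ[MonoidAlgebra k G] U :=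
    equivariantOfLinearOfComm (LinearMap.toSpanSingleton k U u₀ ∘ₗ e.toLinearMap) fun g v => by
      have hv : single g (1 : k) • v = v := by
        rw [Representation.single_smul, one_smul, Representation.trivial_apply]
        rfl
      rw [hv, ← of_apply, h]
  have hf : f ≠ 0 := fun hf => hu₀ <| by
    simpa [f] using LinearMap.congr_fun hf (e.symm 1)
  exact ⟨(LinearEquiv.ofBijective f (LinearMap.bijective_of_ne_zero hf)).symm⟩

end TrivialModule

section CyclicQuotient

variable {k G U : Type*} [CommRing k] [Group G] [AddCommGroup U] [Module (MonoidAlgebra k G) U]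
  {n : ℕ} [NeZero n] {χ : G →* Multiplicative (ZMod n)} {s : G}

theorem map_pow_val_toAdd (hs : χ s = ofAdd 1) (g : G) : χ (s ^ (toAdd (χ g)).val) = χ g := by
  rw [map_pow, hs, ← ofAdd_nsmul, nsmul_one, ZMod.natCast_zmod_val, ofAdd_toAdd]

theorem of_smul_eq_of_pow_smul (hs : χ s = ofAdd 1)
    (hker : ∀ n ∈ χ.ker, ∀ u : U, of k G n • u = u) (g : G) (u : U) :
    of k G g • u = of k G s ^ (toAdd (χ g)).val • u := by
  have hmem : g * (s ^ (toAdd (χ g)).val)⁻¹ ∈ χ.ker := by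
    rw [MonoidHom.mem_ker, map_mul, map_inv, map_pow_val_toAdd hs, mul_inv_cancel]
  calc of k G g • u
      = of k G (g * (s ^ (toAdd (χ g)).val)⁻¹) • of k G (s ^ (toAdd (χ g)).val) • u := by
        rw [← mul_smul, ← map_mul, inv_mul_cancel_right]
    _ = of k G s ^ (toAdd (χ g)).val • u := by rw [hker _ hmem, map_pow]

end CyclicQuotient

def zmodPowHom {M : Type*} [Monoid M] {n : ℕ} [NeZero n] (x : M) (hx : x ^ n = 1) :
    Multiplicative (ZMod n) →* M where
  toFun a := x ^ (toAdd a).val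
  map_one' := by simp
  map_mul' a b := by rw [toAdd_mul, ZMod.val_add, ← pow_eq_pow_mod _ hx, pow_add]

open scoped Matrix

/-- Multiplication by a root `ω` of `X² + X + 1` on `𝔽₄ = 𝔽₂ ⊕ 𝔽₂ ω`. -/
def cubeRootMatrix : Matrix (Fin 2) (Fin 2) (ZMod 2) := !![0, 1; 1, 1]

theorem cubeRootMatrix_pow_three : cubeRootMatrix ^ 3 = 1 := by decide

theorem cubeRootMatrix_mulVec (w : Fin 2 → ZMod 2) :
    cubeRootMatrix *ᵥ w = ![w 1, w 0 + w 1] := by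
  revert w; decide

theorem eq_zero_or_eq_or_eq_cubeRootMatrix_mulVec {x : Fin 2 → ZMod 2} (hx : x ≠ 0)
    (y : Fin 2 → ZMod 2) :
    y = 0 ∨ y = x ∨ y = cubeRootMatrix *ᵥ x ∨ y = x + cubeRootMatrix *ᵥ x := by
  revert x y; decide

section F₄

variable {G U : Type*} [Group G] [AddCommGroup U] [Module (MonoidAlgebra (ZMod 2) G) U]
  {χ : G →* Multiplicative (ZMod 3)} {s : G}

variable (χ) in
def cubeRootRep : Representation (ZMod 2) G (Fin 2 → ZMod 2) :=
  (Matrix.toLinAlgEquiv' : Matrix (Fin 2) (Fin 2) (ZMod 2) ≃ₐ[ZMod 2] _).toMonoidHom.comp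
    ((zmodPowHom cubeRootMatrix cubeRootMatrix_pow_three).comp χ)

theorem cubeRootRep_apply (g : G) (w : Fin 2 → ZMod 2) :
    cubeRootRep χ g w = cubeRootMatrix ^ (toAdd (χ g)).val *ᵥ w :=
  rfl

theorem asModuleEquiv_of_smul_cubeRootRep (hs : χ s = ofAdd 1) (x : (cubeRootRep χ).asModule) :
    (cubeRootRep χ).asModuleEquiv (of (ZMod 2) G s • x) =
      cubeRootMatrix *ᵥ (cubeRootRep χ).asModuleEquiv x := by
  rw [Representation.asModuleEquiv_map_smul, Representation.asAlgebraHom_of, cubeRootRep_apply, hs,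
    toAdd_ofAdd, show (1 : ZMod 3).val = 1 from rfl, pow_one]

theorem isSimpleModule_cubeRootRep_asModule (hs : χ s = ofAdd 1) :
    IsSimpleModule (MonoidAlgebra (ZMod 2) G) (cubeRootRep χ).asModule := by
  let e := (cubeRootRep χ).asModuleEquiv
  refine isSimpleModule_iff_toSpanSingleton_surjective.mpr
    ⟨e.toEquiv.nontrivial, fun x hx y => ?_⟩
  have hS := asModuleEquiv_of_smul_cubeRootRep hs x
  rcases eq_zero_or_eq_or_eq_cubeRootMatrix_mulVec (e.map_ne_zero_iff.mpr hx) (e y) with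
    h | h | h | h
  · exact ⟨0, e.injective (by rw [LinearMap.toSpanSingleton_apply, zero_smul, map_zero, h])⟩
  · exact ⟨1, e.injective (by rw [LinearMap.toSpanSingleton_apply, one_smul, h])⟩
  · exact ⟨of _ G s, e.injective (by rw [LinearMap.toSpanSingleton_apply, hS, h])⟩
  · exact ⟨1 + of _ G s, e.injective (by
      rw [LinearMap.toSpanSingleton_apply, add_smul, one_smul, map_add, hS, h])⟩

theorem isEmpty_linearEquiv_trivial_asModule_cubeRootRep_asModule :
    IsEmpty ((Representation.trivial (ZMod 2) G (ZMod 2)).asModule ≃ₗ[MonoidAlgebra (ZMod 2) G]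
      (cubeRootRep χ).asModule) :=
  ⟨fun e => by simpa [Representation.asModule] using Nat.card_congr e.toEquiv⟩

variable [Module (ZMod 2) U]

theorem of_smul_of_smul_eq_of_fixedSubmodule_eq_bot (hs : χ s = ofAdd 1)
    (hker : ∀ n ∈ χ.ker, ∀ u : U, of (ZMod 2) G n • u = u)
    (hfix : fixedSubmodule (ZMod 2) U (⊤ : Subgroup G) = ⊥) (u : U) :
    of (ZMod 2) G s • of (ZMod 2) G s • u = of (ZMod 2) G s • u + u := by
  set S := of (ZMod 2) G s
  have hS_fixed : ∀ v : U, S • v = v → v = 0 := fun v hv => by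
    rw [← Submodule.mem_bot (MonoidAlgebra (ZMod 2) G), ← hfix, mem_fixedSubmodule]
    exact fun g _ => (of_smul_eq_of_pow_smul hs hker g v).trans
      ((MulAction.stabilizerSubmonoid _ v).pow_mem hv _)
  have hS3 : S • S • S • u = u := by
    rw [← mul_smul, ← mul_smul, ← pow_three', ← map_pow]
    exact hker _ (by rw [MonoidHom.mem_ker, map_pow, hs, ← ofAdd_nsmul]; rfl) u
  have h := hS_fixed (S • S • u + S • u + u) (by rw [smul_add, smul_add, hS3]; abel)
  rw [add_assoc] at h
  rw [eq_neg_of_add_eq_zero_left h, ZModModule.neg_eq_self]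

theorem nonempty_linearEquiv_cubeRootRep_asModule
    [IsScalarTower (ZMod 2) (MonoidAlgebra (ZMod 2) G) U]
    [IsSimpleModule (MonoidAlgebra (ZMod 2) G) U]
    (hs : χ s = ofAdd 1) (hker : ∀ n ∈ χ.ker, ∀ u : U, of (ZMod 2) G n • u = u)
    (hfix : fixedSubmodule (ZMod 2) U (⊤ : Subgroup G) = ⊥) :
    Nonempty (U ≃ₗ[MonoidAlgebra (ZMod 2) G] (cubeRootRep χ).asModule) := by
  have hS2 := of_smul_of_smul_eq_of_fixedSubmodule_eq_bot hs hker hfix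
  set S := of (ZMod 2) G s
  have := IsSimpleModule.nontrivial (MonoidAlgebra (ZMod 2) G) U
  have := isSimpleModule_cubeRootRep_asModule hs
  obtain ⟨u₀, hu₀⟩ := exists_ne (0 : U)
  let f₀ := Fintype.linearCombination (ZMod 2) ![u₀, S • u₀]
  have hf₀ : ∀ w, f₀ (cubeRootMatrix *ᵥ w) = S • f₀ w := fun w => by
    simp only [f₀, Fintype.linearCombination_apply, Fin.sum_univ_two, cubeRootMatrix_mulVec,
      Matrix.cons_val_zero, Matrix.cons_val_one, smul_add, smul_algebra_smul_comm _ S, hS2]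
    rw [add_smul]
    abel
  have hf₀_pow (e : ℕ) : ∀ w, f₀ (cubeRootMatrix ^ e *ᵥ w) = S ^ e • f₀ w := by
    induction e with
    | zero => simp
    | succ e ih => intro w; rw [pow_succ', ← Matrix.mulVec_mulVec, hf₀, ih, pow_succ', mul_smul]
  let f : (cubeRootRep χ).asModule →ₗ[MonoidAlgebra (ZMod 2) G] U :=
    equivariantOfLinearOfComm (f₀ ∘ₗ (cubeRootRep χ).asModuleEquiv.toLinearMap) fun g v => by
      rw [← of_apply, of_smul_eq_of_pow_smul hs hker, LinearMap.comp_apply, LinearMap.comp_apply,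
        LinearEquiv.coe_coe, Representation.asModuleEquiv_map_smul,
        Representation.asAlgebraHom_of, cubeRootRep_apply]
      exact hf₀_pow _ _
  have hf : f ≠ 0 := fun hf => hu₀ <| by
    simpa [f, f₀] using
      LinearMap.congr_fun hf ((cubeRootRep χ).asModuleEquiv.symm (Pi.single 0 1))
  exact ⟨(LinearEquiv.ofBijective f (LinearMap.bijective_of_ne_zero hf)).symm⟩

end F₄

open scoped MatrixGroups

namespace SL₂F₃

def unipotent : SL(2, ZMod 3) := ⟨!![1, 1; 0, 1], by decide⟩

/-- The quotient map onto `SL(2, 𝔽₃) ⧸ Q₈ ≅ C₃`, where `Q₈ = {g | g ^ 4 = 1}` and the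
cosets `Q₈ * unipotent ^ e` are sent to `ofAdd e`. -/
def toC₃ : SL(2, ZMod 3) →* Multiplicative (ZMod 3) where
  toFun g := if g ^ 4 = 1 then 1 else if (g * unipotent⁻¹) ^ 4 = 1 then ofAdd 1 else ofAdd 2
  map_one' := by decide
  map_mul' := by decide

theorem toC₃_unipotent : toC₃ unipotent = ofAdd 1 := by decide

theorem isPGroup_ker_toC₃ : IsPGroup 2 toC₃.ker := fun ⟨g, hg⟩ =>
  ⟨2, Subtype.ext ((by decide : ∀ g, toC₃ g = 1 → g ^ 4 = 1) g hg)⟩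

end SL₂F₃

theorem stmt12 :
    ∃ (V W : Type) (_ : AddCommGroup V) (_ : Module F₂SL₂F₃ V)
      (_ : AddCommGroup W) (_ : Module F₂SL₂F₃ W),
      IsSimpleModule F₂SL₂F₃ V ∧ IsSimpleModule F₂SL₂F₃ W ∧
      IsEmpty (V ≃ₗ[F₂SL₂F₃] W) ∧
      ∀ (U : Type u) [AddCommGroup U] [Module F₂SL₂F₃ U], IsSimpleModule F₂SL₂F₃ U →
        (Nonempty (U ≃ₗ[F₂SL₂F₃] V) ∨ Nonempty (U ≃ₗ[F₂SL₂F₃] W)) := by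
  refine ⟨_, _, _, _, _, _, isSimpleModule_trivial_asModule,
    isSimpleModule_cubeRootRep_asModule SL₂F₃.toC₃_unipotent,
    isEmpty_linearEquiv_trivial_asModule_cubeRootRep_asModule, fun U _ _ _ => ?_⟩
  let _ : Module (ZMod 2) U := Module.compHom U (algebraMap (ZMod 2) F₂SL₂F₃)
  have : IsScalarTower (ZMod 2) F₂SL₂F₃ U := .of_algebraMap_smul fun _ _ => rfl
  have hker := SL₂F₃.isPGroup_ker_toC₃.smul_eq_self_of_isSimpleModule (k := ZMod 2) (U := U)
  rcases eq_bot_or_eq_top (fixedSubmodule (ZMod 2) U (⊤ : Subgroup SL(2, ZMod 3))) with h | h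
  · exact .inr (nonempty_linearEquiv_cubeRootRep_asModule SL₂F₃.toC₃_unipotent hker h)
  · exact .inl <| nonempty_linearEquiv_trivial_asModule fun g =>
      fixedSubmodule_eq_top_iff.mp h g trivial
end

section
/- There exists a simple module V over the group algebra ℚ[SL(2, F₃)], finite-dimensional over ℚ, whose endomorphism ring End_{ℚ[SL(2,F₃)]}(V) is a noncommutative division ring of dimension 4 over ℚ. -/
/-!
The quaternion algebra `(-1, -1)` splits over `𝔽₃`, and reduction modulo 3 maps the 24 units of
the Hurwitz order isomorphically onto `SL(2, 𝔽₃)`. Inverting it gives an embedding of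
`SL(2, 𝔽₃)` in `ℍ[ℚ]ˣ` whose image contains `i` and `j`, so `ℚ[SL(2, 𝔽₃)] → ℍ[ℚ]` is surjective.
Hence `ℍ[ℚ]`, acted on by left multiplication through this map, is a simple module whose
endomorphisms are exactly the right multiplications: its endomorphism ring is `ℍ[ℚ]ᵐᵒᵖ`.
-/

/-- The rational group algebra `ℚ[SL(2, F₃)]`. -/
noncomputable abbrev QSL₂F₃ : Type :=
  MonoidAlgebra ℚ (Matrix.SpecialLinearGroup (Fin 2) (ZMod 3))

open Quaternion
open scoped MatrixGroups

section SurjectiveSMulOne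

variable {A D : Type*} [Ring A] [DivisionRing D] [Module A D] [IsScalarTower A D D]

theorem isSimpleModule_of_surjective_smul_one (h : Function.Surjective fun a : A ↦ a • (1 : D)) :
    IsSimpleModule A D := by
  refine (isSimpleModule_iff A D).mpr ⟨fun N ↦ or_iff_not_imp_left.mpr fun hN ↦ ?_⟩
  obtain ⟨v, hvN, hv⟩ := N.exists_mem_ne_zero_of_ne_bot hN
  refine eq_top_iff.mpr fun w _ ↦ ?_
  obtain ⟨a, ha⟩ : ∃ a : A, a • (1 : D) = w * v⁻¹ := h _
  have hav : a • v = w := by rw [← smul_one_mul, ha, inv_mul_cancel_right₀ hv]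
  exact hav ▸ N.smul_mem a hvN

theorem Module.End.apply_eq_mul_apply_one (h : Function.Surjective fun a : A ↦ a • (1 : D))
    (f : Module.End A D) (d : D) : f d = d * f 1 := by
  obtain ⟨a, rfl⟩ := h d
  rw [map_smul, smul_one_mul]

def Module.End.ringEquivMulOpposite (h : Function.Surjective fun a : A ↦ a • (1 : D)) :
    Module.End A D ≃+* Dᵐᵒᵖ :=
  haveI := SMulCommClass.symm A Dᵐᵒᵖ D
  RingEquiv.symm { Module.toModuleEnd A (S := Dᵐᵒᵖ) D with
    invFun f := MulOpposite.op (f 1)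
    left_inv _ := MulOpposite.unop_injective (one_mul _)
    right_inv f := LinearMap.ext fun d ↦ (Module.End.apply_eq_mul_apply_one h f d).symm }

theorem Module.End.isUnit_of_ne_zero (h : Function.Surjective fun a : A ↦ a • (1 : D))
    {f : Module.End A D} (hf : f ≠ 0) : IsUnit f := by
  let e := Module.End.ringEquivMulOpposite h
  simpa using ((e.map_ne_zero_iff.mpr hf).isUnit).map e.symm

theorem Module.End.exists_mul_ne_mul (h : Function.Surjective fun a : A ↦ a • (1 : D))
    {p q : D} (hpq : p * q ≠ q * p) : ∃ f g : Module.End A D, f * g ≠ g * f := by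
  let e := Module.End.ringEquivMulOpposite h
  refine ⟨e.symm (MulOpposite.op p), e.symm (MulOpposite.op q), fun hfg ↦ hpq ?_⟩
  simpa [← map_mul] using congrArg (MulOpposite.unop ∘ e) hfg.symm

theorem Module.End.finrank_eq_finrank (h : Function.Surjective fun a : A ↦ a • (1 : D))
    {K : Type*} [DivisionRing K] [Module K D] [SMulCommClass A K D] :
    Module.finrank K (Module.End A D) = Module.finrank K D := by
  let e := (Module.End.ringEquivMulOpposite h).toAddEquiv.toLinearEquiv (R := K) fun _ _ ↦ rfl
  rw [e.finrank_eq, MulOpposite.finrank]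

end SurjectiveSMulOne

theorem QuaternionAlgebra.eq_top_of_i_mem_of_j_mem {R : Type*} [CommRing R] {c₁ c₂ c₃ : R}
    {S : Subalgebra R ℍ[R,c₁,c₂,c₃]} (hi : (Basis.self R).i ∈ S) (hj : (Basis.self R).j ∈ S) :
    S = ⊤ := by
  have hk : (Basis.self R).k ∈ S := (Basis.self R).i_mul_j ▸ mul_mem hi hj
  have hsurj : Function.Surjective ((Basis.self R).liftHom : ℍ[R,c₁,c₂,c₃] →ₐ[R] _) :=
    fun x ↦ ⟨x, by ext <;> simp [Basis.lift]⟩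
  rw [eq_top_iff, ← (AlgHom.range_eq_top _).mpr hsurj, Basis.range_liftHom, Algebra.adjoin_le_iff]
  rintro x (rfl | rfl | rfl) <;> assumption

instance {R : Type*} [Zero R] [One R] [Neg R] [DecidableEq R] : DecidableEq ℍ[R] :=
  (Quaternion.equivTuple R).decidableEq

/-- Coordinates of `m` in the basis `1, I, J, IJ` of `M₂(𝔽₃)`, where `I = !![0, -1; 1, 0]` and
`J = !![1, 1; 1, -1]` satisfy `I² = J² = -1` and `IJ = -JI`. -/
def quaternionCoordsMod3 (m : Matrix (Fin 2) (Fin 2) (ZMod 3)) : ℍ[ZMod 3] :=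
  ⟨-(m 0 0 + m 1 1), m 0 1 - m 1 0, m 0 0 + m 0 1 + m 1 0 - m 1 1, m 0 1 + m 1 0 - m 0 0 + m 1 1⟩

/-- The Hurwitz unit reducing to `q` mod 3: the units `±1, ±i, ±j, ±k` have one nonzero
coordinate `±1`, the units `(±1 ± i ± j ± k) / 2` have four, each `±1/2 ≡ ∓1`. -/
def hurwitzUnitLift (q : ℍ[ZMod 3]) : ℍ[ℚ] :=
  let l : ℍ[ℚ] := ⟨q.re.valMinAbs, q.imI.valMinAbs, q.imJ.valMinAbs, q.imK.valMinAbs⟩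
  if q.re ≠ 0 ∧ q.imI ≠ 0 ∧ q.imJ ≠ 0 ∧ q.imK ≠ 0 then -(2⁻¹ : ℚ) • l else l

def sl2F3ToQuaternion : SL(2, ZMod 3) →* ℍ[ℚ] where
  toFun g := hurwitzUnitLift (quaternionCoordsMod3 g)
  map_one' := by decide
  map_mul' := by decide +kernel

theorem sl2F3ToQuaternion_i :
    sl2F3ToQuaternion ⟨!![0, 2; 1, 0], by decide⟩ = (QuaternionAlgebra.Basis.self ℚ).i :=
  rfl

theorem sl2F3ToQuaternion_j :
    sl2F3ToQuaternion ⟨!![1, 1; 1, 2], by decide⟩ = (QuaternionAlgebra.Basis.self ℚ).j :=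
  rfl

noncomputable def groupAlgebraToQuaternion : QSL₂F₃ →ₐ[ℚ] ℍ[ℚ] :=
  MonoidAlgebra.lift ℚ ℍ[ℚ] _ sl2F3ToQuaternion

theorem groupAlgebraToQuaternion_surjective : Function.Surjective groupAlgebraToQuaternion := by
  have hmem (g : SL(2, ZMod 3)) : sl2F3ToQuaternion g ∈ groupAlgebraToQuaternion.range :=
    ⟨MonoidAlgebra.of ℚ _ g, MonoidAlgebra.lift_of _ g⟩
  refine (AlgHom.range_eq_top _).mp (QuaternionAlgebra.eq_top_of_i_mem_of_j_mem ?_ ?_)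
  · exact sl2F3ToQuaternion_i ▸ hmem _
  · exact sl2F3ToQuaternion_j ▸ hmem _

noncomputable instance : Module QSL₂F₃ ℍ[ℚ] :=
  Module.compHom ℍ[ℚ] groupAlgebraToQuaternion.toRingHom

theorem groupAlgebra_smul_def (a : QSL₂F₃) (v : ℍ[ℚ]) : a • v = groupAlgebraToQuaternion a * v :=
  rfl

instance : IsScalarTower QSL₂F₃ ℍ[ℚ] ℍ[ℚ] :=
  ⟨fun a v w ↦ mul_assoc (groupAlgebraToQuaternion a) v w⟩

instance : IsScalarTower ℚ QSL₂F₃ ℍ[ℚ] :=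
  ⟨fun q a v ↦ by simp only [groupAlgebra_smul_def, map_smul, smul_mul_assoc]⟩

instance : SMulCommClass QSL₂F₃ ℚ ℍ[ℚ] :=
  ⟨fun a q v ↦ mul_smul_comm q (groupAlgebraToQuaternion a) v⟩

theorem stmt15 :
    ∃ (V : Type) (_ : AddCommGroup V) (_ : Module QSL₂F₃ V) (_ : Module ℚ V)
      (_ : IsScalarTower ℚ QSL₂F₃ V) (_ : SMulCommClass QSL₂F₃ ℚ V),
      IsSimpleModule QSL₂F₃ V ∧ FiniteDimensional ℚ V ∧
      -- the endomorphism ring is a division ring ...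
      (∀ f : Module.End QSL₂F₃ V, f ≠ 0 → IsUnit f) ∧
      -- ... which is noncommutative ...
      (∃ f g : Module.End QSL₂F₃ V, f * g ≠ g * f) ∧
      -- ... and has dimension 4 over ℚ.
      Module.finrank ℚ (Module.End QSL₂F₃ V) = 4 := by
  have h : Function.Surjective fun a : QSL₂F₃ ↦ a • (1 : ℍ[ℚ]) := by
    simpa only [groupAlgebra_smul_def, mul_one] using groupAlgebraToQuaternion_surjective
  have hij : (⟨0, 1, 0, 0⟩ * ⟨0, 0, 1, 0⟩ : ℍ[ℚ]) ≠ ⟨0, 0, 1, 0⟩ * ⟨0, 1, 0, 0⟩ := by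
    decide +kernel
  refine ⟨ℍ[ℚ], inferInstance, inferInstance, inferInstance, inferInstance, inferInstance,
    isSimpleModule_of_surjective_smul_one h, inferInstance,
    fun _ ↦ Module.End.isUnit_of_ne_zero h, Module.End.exists_mul_ne_mul h hij, ?_⟩
  rw [Module.End.finrank_eq_finrank h, Quaternion.finrank_eq_four]
end
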